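/- Let ℓ ≥ 3 and let w be a word with per(w[1..ℓ]) ≤ ℓ/3. Let j be the largest index such that per(w[1..j]) = per(w[1..ℓ]), and suppose j < |w|. Then per(w[j+2-ℓ..j+1]) > ℓ/3. -/

import Mathlib

variable {α : Type*}

/-- The subword of `w` of length `len` starting at 0-indexed position `i`. -/
def subword (w : List α) (i len : ℕ) : List α := (w.drop i).take len

/-- `u` occurs in `w` at 0-indexed position `i`. -/
def OccursAt (u w : List α) (i : ℕ) : Prop :=
  i + u.length ≤ w.length ∧ subword w i u.length = u

/-- `p` is a period of `w`: `w[i] = w[i+p]` whenever both positions are in range. -/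
def HasPeriod (w : List α) (p : ℕ) : Prop :=
  0 < p ∧ ∀ i : ℕ, i + p < w.length → w[i]? = w[i + p]?

/-- `per w`: the length of the shortest period of `w`. -/
noncomputable def minPeriod (w : List α) : ℕ := sInf {p | HasPeriod w p}

/-!
Let `p = per w[0..j)` and `q = per w[j+1-ℓ..j]`, and suppose both are at most `ℓ/3`. Then
`p + q < ℓ`, so `w[j] = w[j-q] = w[j-q-p] = w[j-p]`, where the outer steps stay inside the window
of period `q` and the middle one inside the prefix of period `p`. Hence `p` is also a period of
`w[0..j]`, and since `per` can only grow when a word is extended, `per w[0..j] = p`, contradicting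
the maximality of `j`. (This is the local instance of Fine–Wilf that the argument needs.)
-/

lemma hasPeriod_length_add_one (w : List α) : HasPeriod w (w.length + 1) :=
  ⟨Nat.succ_pos _, fun _ hi => by omega⟩

lemma hasPeriod_minPeriod (w : List α) : HasPeriod w (minPeriod w) :=
  Nat.sInf_mem (s := {p | HasPeriod w p}) ⟨_, hasPeriod_length_add_one w⟩

lemma minPeriod_le {w : List α} {p : ℕ} (h : HasPeriod w p) : minPeriod w ≤ p :=
  Nat.sInf_le h

namespace HasPeriod

lemma take {w : List α} {p : ℕ} (h : HasPeriod w p) (n : ℕ) : HasPeriod (w.take n) p := by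
  refine ⟨h.1, fun i hi => ?_⟩
  rw [List.length_take] at hi
  rw [List.getElem?_take_of_lt (by omega), List.getElem?_take_of_lt (by omega)]
  exact h.2 i (by omega)

lemma getElem?_eq_of_subword {w : List α} {s n p i : ℕ} (h : HasPeriod (subword w s n) p)
    (hsi : s ≤ i) (hin : i + p < s + n) (hiw : i + p < w.length) : w[i]? = w[i + p]? := by
  have := h.2 (i - s) (by simp only [subword, List.length_take, List.length_drop]; omega)
  rwa [subword, List.getElem?_take_of_lt (by omega), List.getElem?_take_of_lt (by omega),
    List.getElem?_drop, List.getElem?_drop, Nat.add_sub_cancel' hsi,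
    ← Nat.add_assoc, Nat.add_sub_cancel' hsi] at this

lemma getElem?_eq_of_take {w : List α} {n p i : ℕ} (h : HasPeriod (w.take n) p)
    (hin : i + p < n) (hiw : i + p < w.length) : w[i]? = w[i + p]? :=
  getElem?_eq_of_subword (s := 0) (by simpa [subword] using h) (Nat.zero_le i) (by omega) hiw

lemma take_succ {w : List α} {p j : ℕ} (h : HasPeriod (w.take j) p)
    (hj : w[j - p]? = w[j]?) (hpj : p ≤ j) : HasPeriod (w.take (j + 1)) p := by
  refine ⟨h.1, fun i hi => ?_⟩
  rw [List.length_take] at hi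
  rw [List.getElem?_take_of_lt (by omega), List.getElem?_take_of_lt (by omega)]
  rcases Nat.lt_or_ge (i + p) j with hij | hij
  · exact h.getElem?_eq_of_take hij (by omega)
  · obtain rfl : i = j - p := by omega
    rwa [Nat.sub_add_cancel hpj]

end HasPeriod

lemma minPeriod_take_le (w : List α) (n : ℕ) : minPeriod (w.take n) ≤ minPeriod w :=
  minPeriod_le ((hasPeriod_minPeriod w).take n)

lemma getElem?_sub_eq_of_hasPeriod_take_of_hasPeriod_subword {w : List α} {s n p q j : ℕ}
    (hp : HasPeriod (w.take j) p) (hq : HasPeriod (subword w s n) q)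
    (hjn : j < s + n) (hjw : j < w.length) (hpq : s + p + q ≤ j) : w[j - p]? = w[j]? := by
  have hq_pos := hq.1
  have hqj : w[j - q]? = w[j - q + q]? :=
    hq.getElem?_eq_of_subword (by omega) (by omega) (by omega)
  have hpjq : w[j - q - p]? = w[j - q - p + p]? :=
    hp.getElem?_eq_of_take (by omega) (by omega)
  have hqjp : w[j - q - p]? = w[j - q - p + q]? :=
    hq.getElem?_eq_of_subword (by omega) (by omega) (by omega)
  rw [Nat.sub_add_cancel (by omega)] at hqj hpjq
  rw [show j - q - p + q = j - p by omega] at hqjp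
  rw [← hqjp, hpjq, hqj]

theorem statement_8_general (w : List α) (ℓ j : ℕ)
    (hper : 3 * minPeriod (w.take ℓ) ≤ ℓ)
    (hℓj : ℓ ≤ j) (hj : j < w.length)
    (heq : minPeriod (w.take j) = minPeriod (w.take ℓ))
    (hmax : minPeriod (w.take (j + 1)) ≠ minPeriod (w.take ℓ)) :
    ℓ < 3 * minPeriod (subword w (j + 1 - ℓ) ℓ) := by
  by_contra! hwindow
  set p := minPeriod (w.take ℓ)
  set q := minPeriod (subword w (j + 1 - ℓ) ℓ)
  have hp : HasPeriod (w.take j) p := heq ▸ hasPeriod_minPeriod _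
  have hq : HasPeriod (subword w (j + 1 - ℓ) ℓ) q := hasPeriod_minPeriod _
  have hp_pos := hp.1
  have hextend : HasPeriod (w.take (j + 1)) p :=
    hp.take_succ (getElem?_sub_eq_of_hasPeriod_take_of_hasPeriod_subword hp hq
      (by omega) hj (by omega)) (by omega)
  have hmono : p ≤ minPeriod (w.take (j + 1)) := by
    simpa [heq, List.take_take] using minPeriod_take_le (w.take (j + 1)) j
  exact hmax (le_antisymm (minPeriod_le hextend) hmono)

/-- Let `ℓ ≥ 3` and `per (w.take ℓ) ≤ ℓ/3`. If `j` is the largest index with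
`per (w.take j) = per (w.take ℓ)` (so `j ≥ ℓ` and the equality fails for `j + 1`)
and `j < |w|`, then the length-`ℓ` subword ending at (0-indexed) position `j`,
namely `w[j+1-ℓ..j]`, is not highly periodic. -/
theorem statement_8 (w : List α) (ℓ j : ℕ)
    (hℓ : 3 ≤ ℓ)
    (hper : 3 * minPeriod (w.take ℓ) ≤ ℓ)
    (hℓj : ℓ ≤ j) (hj : j < w.length)
    (heq : minPeriod (w.take j) = minPeriod (w.take ℓ))
    (hmax : minPeriod (w.take (j + 1)) ≠ minPeriod (w.take ℓ)) :
    ℓ < 3 * minPeriod (subword w (j + 1 - ℓ) ℓ) :=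
  statement_8_general w ℓ j hper hℓj hj heq hmax
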